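/- Let A be a ring and let f: F → R be a quasi-isomorphism of bounded-below cochain complexes of A-modules. Set s = inf{i : h^i(R) ≠ 0}, let f̃: F^{≥s} → R be the morphism induced by f on the brutal truncation F^{≥s}, and define g: F^{≤s−1} → cone(f̃) by g^j = f^j for j ≤ s−2, g^{s−1} = (d_F^{s−1}, f^{s−1}): F^{s−1} → F^s ⊕ R^{s−1}, and g^j = 0 for j ≥ s. Then g is a quasi-isomorphism. -/

import Mathlib

/-!
Statement: if `f : F ⟶ R` is a quasi-isomorphism of bounded-below cochain complexes of
`A`-modules, `s = inf {i | h^i(R) ≠ 0}`, `f̃ : F^{≥s} ⟶ R` the morphism induced by `f`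
on the brutal truncation, then the morphism `g : F^{≤ s-1} ⟶ cone(f̃)` with components
`g^j = f^j` for `j ≤ s-2`, `g^{s-1} = (d_F^{s-1}, f^{s-1})`, `g^j = 0` for `j ≥ s`,
is a quasi-isomorphism.
-/

open CategoryTheory Limits

noncomputable section

/-- `ℤ`-indexed cochain complexes of `A`-modules -/
abbrev Cx (A : Type) [Ring A] := CochainComplex (ModuleCat.{0} A) ℤ

variable {A : Type} [Ring A]

/-- the brutal truncation `F^{≥ s}`: `0 ⟶ F^s ⟶ F^{s+1} ⟶ ⋯` -/
abbrev truncGE (F : Cx A) (s : ℤ) : Cx A :=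
  CochainComplex.of
    (fun n => if s ≤ n then F.X n else ModuleCat.of A PUnit)
    (fun n => if h : s ≤ n then
        eqToHom (if_pos h) ≫ F.d n (n + 1) ≫
          eqToHom (if_pos (show s ≤ n + 1 by omega)).symm
      else 0)
    (fun n => by
      try dsimp only
      by_cases h : s ≤ n
      · rw [dif_pos h, dif_pos (show s ≤ n + 1 by omega)]
        simp
      · rw [dif_neg h, zero_comp])

/-- the natural inclusion `F^{≥ s} ⟶ F` -/
abbrev truncGEι (F : Cx A) (s : ℤ) : truncGE F s ⟶ F where
  f n := if h : s ≤ n then eqToHom (if_pos h) else 0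
  comm' := fun i j hij => by
    simp only [ComplexShape.up_Rel] at hij
    subst hij
    dsimp only
    by_cases h : s ≤ i
    · rw [dif_pos h, dif_pos (show s ≤ i + 1 by omega)]
      simp [truncGE, h, show s ≤ i + 1 by omega]
    · rw [dif_neg h, zero_comp]
      by_cases h' : s ≤ i + 1
      · rw [dif_pos h']
        simp [truncGE, h]
      · rw [dif_neg h', comp_zero]

/-- the brutal truncation `F^{≤ s}`: `⋯ ⟶ F^{s-1} ⟶ F^s ⟶ 0` -/
abbrev truncLE (F : Cx A) (s : ℤ) : Cx A :=
  CochainComplex.of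
    (fun n => if n ≤ s then F.X n else ModuleCat.of A PUnit)
    (fun n => if h : n + 1 ≤ s then
        eqToHom (if_pos (show n ≤ s by omega)) ≫ F.d n (n + 1) ≫
          eqToHom (if_pos h).symm
      else 0)
    (fun n => by
      try dsimp only
      by_cases h : n + 1 ≤ s
      · by_cases h' : n + 1 + 1 ≤ s
        · rw [dif_pos h, dif_pos h']
          simp
        · rw [dif_neg h', comp_zero]
      · rw [dif_neg h, zero_comp])

/-- the mapping cone of `u : K ⟶ R`: `cone(u)ⁿ = K^{n+1} ⊕ Rⁿ`, with differential
`d(x, y) = (-d_K x, -u(x) + d_R y)` -/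
abbrev cone {K R : Cx A} (u : K ⟶ R) : Cx A :=
  CochainComplex.of
    (fun n => K.X (n + 1) ⊞ R.X n)
    (fun n => biprod.lift
      (biprod.fst ≫ (-(K.d (n + 1) (n + 1 + 1))))
      (biprod.fst ≫ (-(u.f (n + 1))) + biprod.snd ≫ R.d n (n + 1)))
    (fun n => by
      apply biprod.hom_ext
      · simp
      · simp [u.comm (n + 1) (n + 1 + 1)])

namespace QIT
open CategoryTheory Limits

variable {A : Type} [Ring A]

lemma isZero_elim {M : ModuleCat.{0} A} (h : IsZero M) (x : M) : x = 0 := by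
  have h1 : (𝟙 M) = (0 : M ⟶ M) := h.eq_of_src _ _
  have h2 := ConcreteCategory.congr_hom h1 x
  simpa using h2

noncomputable abbrev bp {M N : ModuleCat.{0} A} (x : M) (y : N) : (M ⊞ N : ModuleCat.{0} A) :=
  (ModuleCat.biprodIsoProd M N).inv (x, y)

lemma bp_fst {M N : ModuleCat.{0} A} (x : M) (y : N) :
    (biprod.fst : (M ⊞ N : ModuleCat.{0} A) ⟶ M) (bp x y) = x :=
  ModuleCat.biprodIsoProd_inv_comp_fst_apply M N (x, y)

lemma bp_snd {M N : ModuleCat.{0} A} (x : M) (y : N) :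
    (biprod.snd : (M ⊞ N : ModuleCat.{0} A) ⟶ N) (bp x y) = y :=
  ModuleCat.biprodIsoProd_inv_comp_snd_apply M N (x, y)

lemma bp_eta {M N : ModuleCat.{0} A} (z : (M ⊞ N : ModuleCat.{0} A)) :
    bp ((biprod.fst : _ ⟶ M) z) ((biprod.snd : _ ⟶ N) z) = z := by
  have hz := ConcreteCategory.congr_hom (ModuleCat.biprodIsoProd M N).hom_inv_id z
  have hz' : (ModuleCat.biprodIsoProd M N).inv ((ModuleCat.biprodIsoProd M N).hom z) = z := hz
  have h1 : (biprod.fst : _ ⟶ M) z = ((ModuleCat.biprodIsoProd M N).hom z).1 := by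
    conv_lhs => rw [← hz']
    exact ModuleCat.biprodIsoProd_inv_comp_fst_apply M N _
  have h2 : (biprod.snd : _ ⟶ N) z = ((ModuleCat.biprodIsoProd M N).hom z).2 := by
    conv_lhs => rw [← hz']
    exact ModuleCat.biprodIsoProd_inv_comp_snd_apply M N _
  rw [bp, h1, h2]
  exact hz'

lemma bp_ext {M N : ModuleCat.{0} A} {z w : (M ⊞ N : ModuleCat.{0} A)}
    (h1 : (biprod.fst : _ ⟶ M) z = (biprod.fst : _ ⟶ M) w)
    (h2 : (biprod.snd : _ ⟶ N) z = (biprod.snd : _ ⟶ N) w) : z = w := by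
  rw [← bp_eta z, ← bp_eta w, h1, h2]

lemma lift_fst_apply {M N P : ModuleCat.{0} A} (a : P ⟶ M) (b : P ⟶ N) (w : P) :
    (biprod.fst : (M ⊞ N : ModuleCat.{0} A) ⟶ M) (biprod.lift a b w) = a w :=
  ConcreteCategory.congr_hom (biprod.lift_fst a b) w

lemma lift_snd_apply {M N P : ModuleCat.{0} A} (a : P ⟶ M) (b : P ⟶ N) (w : P) :
    (biprod.snd : (M ⊞ N : ModuleCat.{0} A) ⟶ N) (biprod.lift a b w) = b w :=
  ConcreteCategory.congr_hom (biprod.lift_snd a b) w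

lemma eq_cancel₁ {M N : ModuleCat.{0} A} (h : M = N) (x : M) :
    eqToHom h.symm (eqToHom h x) = x := by subst h; rfl

lemma eq_cancel₂ {M N : ModuleCat.{0} A} (h : M = N) (y : N) :
    eqToHom h (eqToHom h.symm y) = y := by subst h; rfl

lemma eq_inj {M N : ModuleCat.{0} A} (h : M = N) {x y : M}
    (hxy : eqToHom h x = eqToHom h y) : x = y := by subst h; exact hxy

lemma eq_trans_app {M N P : ModuleCat.{0} A} (h1 : M = N) (h2 : N = P) (x : M) :
    eqToHom h2 (eqToHom h1 x) = eqToHom (h1.trans h2) x := by subst h1; subst h2; rfl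

lemma eq_rfl_app {M : ModuleCat.{0} A} (h : M = M) (x : M) : eqToHom h x = x := rfl

lemma eq_app_eq_zero {M N : ModuleCat.{0} A} (h : M = N) {x : M} (hx : eqToHom h x = 0) :
    x = 0 := by subst h; simpa using hx

lemma moduleCat_isIso_iff_bijective {M N : ModuleCat.{0} A} (f : M ⟶ N) :
    IsIso f ↔ Function.Bijective f := by
  constructor
  · intro h
    exact (asIso f).toLinearEquiv.bijective
  · intro h
    exact ⟨ModuleCat.ofHom (LinearEquiv.ofBijective f.hom h).symm.toLinearMap,
      ModuleCat.hom_ext (LinearMap.ext fun x => (LinearEquiv.ofBijective f.hom h).symm_apply_apply x),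
      ModuleCat.hom_ext (LinearMap.ext fun x => (LinearEquiv.ofBijective f.hom h).apply_symm_apply x)⟩

section SC
variable {S₁ S₂ : ShortComplex (ModuleCat.{0} A)}

/-- induced map on kernels -/
noncomputable def kerMap (φ : S₁ ⟶ S₂) :
    ModuleCat.of A (LinearMap.ker S₁.g.hom) ⟶ ModuleCat.of A (LinearMap.ker S₂.g.hom) :=
  ModuleCat.ofHom (LinearMap.restrict φ.τ₂.hom (fun x hx => by
    rw [LinearMap.mem_ker] at hx ⊢
    have h : S₂.g (φ.τ₂ x) = φ.τ₃ (S₁.g x) := ConcreteCategory.congr_hom φ.comm₂₃ x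
    exact h.trans ((congrArg φ.τ₃ hx).trans (map_zero _))))

lemma kerMap_apply (φ : S₁ ⟶ S₂) (x : LinearMap.ker S₁.g.hom) :
    (kerMap φ x).1 = φ.τ₂ x.1 := rfl

/-- data for the homology map -/
noncomputable def lhMapData (φ : S₁ ⟶ S₂) :
    ShortComplex.LeftHomologyMapData φ S₁.moduleCatLeftHomologyData
      S₂.moduleCatLeftHomologyData where
  φK := kerMap φ
  φH := ModuleCat.ofHom (Submodule.mapQ _ _ (kerMap φ).hom (by
    rintro _ ⟨x, rfl⟩
    refine ⟨φ.τ₁ x, ?_⟩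
    apply Subtype.ext
    show S₂.f (φ.τ₁ x) = (kerMap φ (S₁.moduleCatToCycles x)).1
    rw [kerMap_apply]
    exact ConcreteCategory.congr_hom φ.comm₁₂ x))
  commi := by
    apply ModuleCat.hom_ext; apply LinearMap.ext; intro x
    rfl
  commf' := by
    apply ModuleCat.hom_ext; apply LinearMap.ext; intro x
    apply Subtype.ext
    show (kerMap φ (S₁.moduleCatToCycles x)).1 = S₂.f (φ.τ₁ x)
    rw [kerMap_apply]
    exact (ConcreteCategory.congr_hom φ.comm₁₂ x).symm
  commπ := by
    apply ModuleCat.hom_ext; apply LinearMap.ext; intro x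
    rfl

lemma moduleCat_quasiIso_iff (φ : S₁ ⟶ S₂) :
    ShortComplex.QuasiIso φ ↔
      ((∀ x : S₁.X₂, S₁.g x = 0 → (∃ y, S₂.f y = φ.τ₂ x) → ∃ w, S₁.f w = x) ∧
       (∀ y : S₂.X₂, S₂.g y = 0 →
          ∃ (x : S₁.X₂) (z : S₂.X₁), S₁.g x = 0 ∧ φ.τ₂ x + S₂.f z = y)) := by
  rw [(lhMapData φ).quasiIso_iff, moduleCat_isIso_iff_bijective]
  constructor
  · intro h
    constructor
    · rintro x hx ⟨y, hy⟩
      set x' : LinearMap.ker S₁.g.hom := ⟨x, hx⟩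
      have h0 : (lhMapData φ).φH (Submodule.Quotient.mk x') = 0 := by
        show Submodule.Quotient.mk (kerMap φ x') = (0 : LinearMap.ker S₂.g.hom ⧸ LinearMap.range S₂.moduleCatToCycles)
        rw [Submodule.Quotient.mk_eq_zero]
        exact ⟨y, Subtype.ext hy⟩
      have h1 : (Submodule.Quotient.mk x' :
          (LinearMap.ker S₁.g.hom ⧸ LinearMap.range S₁.moduleCatToCycles)) = 0 := by
        apply h.1
        rw [h0]
        exact (map_zero _).symm
      rw [Submodule.Quotient.mk_eq_zero] at h1
      obtain ⟨w, hw⟩ := h1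
      exact ⟨w, congrArg Subtype.val hw⟩
    · intro y hy
      set y' : LinearMap.ker S₂.g.hom := ⟨y, hy⟩
      obtain ⟨q, hq⟩ := h.2 (Submodule.Quotient.mk y')
      obtain ⟨x', rfl⟩ := Submodule.Quotient.mk_surjective _ q
      have h1 : (Submodule.Quotient.mk (kerMap φ x') :
          (LinearMap.ker S₂.g.hom ⧸ LinearMap.range S₂.moduleCatToCycles)) =
          Submodule.Quotient.mk y' := hq
      rw [Submodule.Quotient.eq] at h1
      obtain ⟨z, hz⟩ := h1
      refine ⟨x'.1, -z, x'.2, ?_⟩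
      have hz1 : S₂.f z = φ.τ₂ x'.1 - y := congrArg Subtype.val hz
      rw [map_neg, hz1]
      abel
  · rintro ⟨hinj, hsurj⟩
    constructor
    · rw [injective_iff_map_eq_zero]
      intro q hq
      obtain ⟨x', rfl⟩ := Submodule.Quotient.mk_surjective _ q
      have h0 : (Submodule.Quotient.mk (kerMap φ x') :
          (LinearMap.ker S₂.g.hom ⧸ LinearMap.range S₂.moduleCatToCycles)) = 0 := hq
      rw [Submodule.Quotient.mk_eq_zero] at h0
      obtain ⟨y, hy⟩ := h0
      obtain ⟨w, hw⟩ := hinj x'.1 x'.2 ⟨y, congrArg Subtype.val hy⟩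
      show Submodule.Quotient.mk x' = 0
      rw [Submodule.Quotient.mk_eq_zero]
      exact ⟨w, Subtype.ext hw⟩
    · intro q
      obtain ⟨y', rfl⟩ := Submodule.Quotient.mk_surjective _ q
      obtain ⟨x, z, hx, hxz⟩ := hsurj y'.1 y'.2
      refine ⟨Submodule.Quotient.mk ⟨x, hx⟩, ?_⟩
      show Submodule.Quotient.mk (kerMap φ ⟨x, hx⟩) = Submodule.Quotient.mk y'
      rw [Submodule.Quotient.eq]
      refine ⟨-z, Subtype.ext ?_⟩
      show S₂.f (-z) = (kerMap φ ⟨x, hx⟩).1 - y'.1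
      rw [map_neg, kerMap_apply, ← hxz]
      abel
end SC

section Cx
variable {K L : CochainComplex (ModuleCat.{0} A) ℤ}

lemma quasiIsoAt_congr (φ : K ⟶ L) {a b : ℤ} (h : a = b) :
    QuasiIsoAt φ a ↔ QuasiIsoAt φ b := by subst h; rfl

lemma d_congr (K : CochainComplex (ModuleCat.{0} A) ℤ) {i i' : ℤ} (j : ℤ) (h : i = i')
    (x : K.X i) :
    K.d i j x = K.d i' j (eqToHom (congrArg K.X h) x) := by subst h; rfl

lemma quasiIsoAt_concrete_iff (φ : K ⟶ L) (i j k : ℤ) (hij : i + 1 = j) (hjk : j + 1 = k) :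
    QuasiIsoAt φ j ↔
      ((∀ x : K.X j, K.d j k x = 0 →
          (∃ y, L.d i j y = φ.f j x) → ∃ w, K.d i j w = x) ∧
       (∀ y : L.X j, L.d j k y = 0 →
          ∃ (x : K.X j) (z : L.X i), K.d j k x = 0 ∧ φ.f j x + L.d i j z = y)) := by
  subst hij; subst hjk
  rw [quasiIsoAt_iff' φ i (i+1) (i+1+1) (by simp) (by simp)]
  exact moduleCat_quasiIso_iff _

lemma exactAt_concrete_iff (K : CochainComplex (ModuleCat.{0} A) ℤ) (i j k : ℤ)
    (hij : i + 1 = j) (hjk : j + 1 = k) :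
    K.ExactAt j ↔ ∀ x : K.X j, K.d j k x = 0 → ∃ w, K.d i j w = x := by
  subst hij; subst hjk
  rw [K.exactAt_iff' i (i+1) (i+1+1) (by simp) (by simp)]
  exact ShortComplex.moduleCat_exact_iff _

end Cx
end QIT
namespace QIT2
open CategoryTheory Limits QIT

variable {A : Type} [Ring A]

lemma tGE_X (F : Cx A) {s i : ℤ} (h : s ≤ i) : (truncGE F s).X i = F.X i := if_pos h

lemma tGE_isZero (F : Cx A) {s i : ℤ} (h : ¬ s ≤ i) : IsZero ((truncGE F s).X i) := by
  refine (ModuleCat.isZero_of_subsingleton (ModuleCat.of A PUnit)).of_iso (eqToIso ?_)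
  exact if_neg h

lemma tLE_X (F : Cx A) {s i : ℤ} (h : i ≤ s) : (truncLE F s).X i = F.X i := if_pos h

lemma tLE_isZero (F : Cx A) {s i : ℤ} (h : ¬ i ≤ s) : IsZero ((truncLE F s).X i) := by
  refine (ModuleCat.isZero_of_subsingleton (ModuleCat.of A PUnit)).of_iso (eqToIso ?_)
  exact if_neg h

lemma tGE_d_apply (F : Cx A) {s i j : ℤ} (hij : i + 1 = j) (hi : s ≤ i)
    (x : (truncGE F s).X i) :
    eqToHom (tGE_X F (show s ≤ j by omega)) ((truncGE F s).d i j x) =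
      F.d i j (eqToHom (tGE_X F hi) x) := by
  subst hij
  have hd : (truncGE F s).d i (i+1) =
      eqToHom (tGE_X F hi) ≫ F.d i (i + 1) ≫ eqToHom (tGE_X F (show s ≤ i + 1 by omega)).symm := by
    dsimp only [truncGE]
    simp only [CochainComplex.of_d, dif_pos hi]
  rw [hd]
  exact eq_cancel₂ _ _

lemma tGE_d_zero (F : Cx A) {s i j : ℤ} (hij : i + 1 = j) (hi : ¬ s ≤ i) :
    (truncGE F s).d i j = 0 := by
  subst hij
  dsimp only [truncGE]
  simp only [CochainComplex.of_d, dif_neg hi]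

lemma tLE_d_apply (F : Cx A) {s i j : ℤ} (hij : i + 1 = j) (hj : j ≤ s)
    (x : (truncLE F s).X i) :
    eqToHom (tLE_X F hj) ((truncLE F s).d i j x) =
      F.d i j (eqToHom (tLE_X F (show i ≤ s by omega)) x) := by
  subst hij
  have hd : (truncLE F s).d i (i+1) =
      eqToHom (tLE_X F (show i ≤ s by omega)) ≫ F.d i (i + 1) ≫ eqToHom (tLE_X F hj).symm := by
    dsimp only [truncLE]
    simp only [CochainComplex.of_d, dif_pos hj]
  rw [hd]
  exact eq_cancel₂ _ _

lemma tLE_d_zero (F : Cx A) {s i j : ℤ} (hij : i + 1 = j) (hj : ¬ j ≤ s) :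
    (truncLE F s).d i j = 0 := by
  subst hij
  dsimp only [truncLE]
  simp only [CochainComplex.of_d, dif_neg hj]

lemma tGEι_f (F : Cx A) {s i : ℤ} (h : s ≤ i) :
    (truncGEι F s).f i = eqToHom (tGE_X F h) := dif_pos h

lemma tGEι_f_zero (F : Cx A) {s i : ℤ} (h : ¬ s ≤ i) :
    (truncGEι F s).f i = 0 := dif_neg h

section ConeLemmas
variable {K R : Cx A} (u : K ⟶ R)

lemma cone_d_fst {i j : ℤ} (hij : i + 1 = j) (z : (cone u).X i) :
    (biprod.fst : (cone u).X j ⟶ K.X (j+1)) ((cone u).d i j z) =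
      - K.d (i+1) (j+1) ((biprod.fst : (cone u).X i ⟶ K.X (i+1)) z) := by
  subst hij
  have hd : (cone u).d i (i+1) = biprod.lift
      (biprod.fst ≫ (-(K.d (i + 1) (i + 1 + 1))))
      (biprod.fst ≫ (-(u.f (i + 1))) + biprod.snd ≫ R.d i (i + 1)) :=
    by dsimp only [cone]; simp only [CochainComplex.of_d]
  rw [hd]
  exact lift_fst_apply _ _ z

lemma cone_d_snd {i j : ℤ} (hij : i + 1 = j) (z : (cone u).X i) :
    (biprod.snd : (cone u).X j ⟶ R.X j) ((cone u).d i j z) =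
      - u.f j (eqToHom (congrArg K.X hij) ((biprod.fst : (cone u).X i ⟶ K.X (i+1)) z))
        + R.d i j ((biprod.snd : (cone u).X i ⟶ R.X i) z) := by
  subst hij
  have hd : (cone u).d i (i+1) = biprod.lift
      (biprod.fst ≫ (-(K.d (i + 1) (i + 1 + 1))))
      (biprod.fst ≫ (-(u.f (i + 1))) + biprod.snd ≫ R.d i (i + 1)) :=
    by dsimp only [cone]; simp only [CochainComplex.of_d]
  rw [hd]
  exact lift_snd_apply _ _ z

end ConeLemmas
end QIT2
/--
Let `A` be a ring and `f : F ⟶ R` a quasi-isomorphism of bounded-below cochain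
complexes of `A`-modules.  Let `s = inf {i | h^i(R) ≠ 0}`, let `f̃ : F^{≥s} ⟶ R` be
the morphism induced by `f` on the brutal truncation, and let `g : F^{≤ s-1} ⟶ cone(f̃)`
be the morphism whose components are given by `g^j = f^j` (into the summand `R^j`)
for `j ≤ s-2`, `g^{s-1} = (d_F^{s-1}, f^{s-1}) : F^{s-1} ⟶ F^s ⊕ R^{s-1}`, and
`g^j = 0` for `j ≥ s`.  Then `g` is a quasi-isomorphism.
-/
theorem quasiIso_of_truncLE_to_cone
    (F R : Cx A) (f : F ⟶ R) (hf : QuasiIso f)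
    (hFbdd : ∃ a : ℤ, ∀ i, i < a → IsZero (F.X i))
    (hRbdd : ∃ a : ℤ, ∀ i, i < a → IsZero (R.X i))
    (s : ℤ) (hs : IsLeast {i : ℤ | ¬ IsZero (R.homology i)} s)
    (g : truncLE F (s - 1) ⟶ cone (truncGEι F s ≫ f))
    (hg_low : ∀ (j : ℤ) (hj : j ≤ s - 2),
      g.f j = eqToHom (show (truncLE F (s - 1)).X j = F.X j from if_pos (by omega)) ≫
        f.f j ≫ (biprod.inr : R.X j ⟶ (cone (truncGEι F s ≫ f)).X j))
    (hg_mid : g.f (s - 1) =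
      eqToHom (show (truncLE F (s - 1)).X (s - 1) = F.X (s - 1) from if_pos (by omega)) ≫
        (biprod.lift
          (F.d (s - 1) (s - 1 + 1) ≫
            eqToHom (show F.X (s - 1 + 1) = (truncGE F s).X (s - 1 + 1) from
              (if_pos (by omega)).symm))
          (f.f (s - 1)) :
          F.X (s - 1) ⟶ (cone (truncGEι F s ≫ f)).X (s - 1)))
    (hg_high : ∀ (j : ℤ) (hj : s ≤ j), g.f j = 0) :
    QuasiIso g := by
  haveI := hf
  have hRhom : ∀ i : ℤ, i < s → IsZero (R.homology i) := by
    intro i hi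
    by_contra hcon
    have h2 := hs.2 hcon
    omega
  have hFhom : ∀ i : ℤ, i < s → IsZero (F.homology i) := by
    intro i hi
    exact (hRhom i hi).of_iso (asIso (HomologicalComplex.homologyMap f i))
  have hRconc : ∀ i j k : ℤ, i + 1 = j → j + 1 = k → j < s →
      ∀ y : R.X j, R.d j k y = 0 → ∃ z, R.d i j z = y := by
    intro i j k hij hjk hjs
    rw [← QIT.exactAt_concrete_iff R i j k hij hjk,
      HomologicalComplex.exactAt_iff_isZero_homology]
    exact hRhom j hjs
  have hFconc : ∀ i j k : ℤ, i + 1 = j → j + 1 = k → j < s →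
      ∀ y : F.X j, F.d j k y = 0 → ∃ z, F.d i j z = y := by
    intro i j k hij hjk hjs
    rw [← QIT.exactAt_concrete_iff F i j k hij hjk,
      HomologicalComplex.exactAt_iff_isZero_homology]
    exact hFhom j hjs
  have hfinj : ∀ i j k : ℤ, i + 1 = j → j + 1 = k → ∀ x : F.X j, F.d j k x = 0 →
      (∃ y, R.d i j y = f.f j x) → ∃ w, F.d i j w = x :=
    fun i j k hij hjk => ((QIT.quasiIsoAt_concrete_iff f i j k hij hjk).mp (hf.quasiIsoAt j)).1
  have hfsurj : ∀ i j k : ℤ, i + 1 = j → j + 1 = k → ∀ y : R.X j, R.d j k y = 0 →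
      ∃ (x : F.X j) (z : R.X i), F.d j k x = 0 ∧ f.f j x + R.d i j z = y :=
    fun i j k hij hjk => ((QIT.quasiIsoAt_concrete_iff f i j k hij hjk).mp (hf.quasiIsoAt j)).2
  refine ⟨fun n => ?_⟩
  rcases lt_trichotomy n (s-1) with hn | hn | hn
  · -- case A : n ≤ s - 2, both exact
    have hL : (truncLE F (s-1)).ExactAt n := by
      rw [QIT.exactAt_concrete_iff _ (n-1) n (n+1) (by omega) rfl]
      intro x hx
      have e1 : (truncLE F (s-1)).X n = F.X n := QIT2.tLE_X F (by omega)
      have e0 : (truncLE F (s-1)).X (n-1) = F.X (n-1) := QIT2.tLE_X F (by omega)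
      have h2 := QIT2.tLE_d_apply F (rfl : n + 1 = n + 1) (show n+1 ≤ s-1 by omega) x
      rw [hx, map_zero] at h2
      obtain ⟨w', hw'⟩ := hFconc (n-1) n (n+1) (by omega) rfl (by omega) (eqToHom e1 x) h2.symm
      refine ⟨eqToHom e0.symm w', ?_⟩
      apply QIT.eq_inj e1
      have h3 := QIT2.tLE_d_apply F (show n-1+1 = n by omega) (show n ≤ s-1 by omega)
        (eqToHom e0.symm w')
      have h4 : eqToHom (QIT2.tLE_X F (show n-1 ≤ s-1 by omega)) (eqToHom e0.symm w') = w' :=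
        QIT.eq_cancel₂ _ _
      rw [h4] at h3
      exact h3.trans (hw'.trans rfl)
    have hC : (cone (truncGEι F s ≫ f)).ExactAt n := by
      rw [QIT.exactAt_concrete_iff _ (n-1) n (n+1) (by omega) rfl]
      intro x hx
      have hz1 : IsZero ((truncGE F s).X (n+1)) := QIT2.tGE_isZero F (by omega)
      have hfst0 : (biprod.fst : (cone (truncGEι F s ≫ f)).X n ⟶ (truncGE F s).X (n+1)) x = 0 :=
        QIT.isZero_elim hz1 _
      have h1 := QIT2.cone_d_snd (truncGEι F s ≫ f) (rfl : n + 1 = n + 1) x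
      rw [hx, hfst0] at h1
      simp only [map_zero, neg_zero, zero_add] at h1
      obtain ⟨z, hz⟩ := hRconc (n-1) n (n+1) (by omega) rfl (by omega) _ h1.symm
      refine ⟨QIT.bp 0 z, ?_⟩
      apply QIT.bp_ext
      · rw [QIT2.cone_d_fst (truncGEι F s ≫ f) (show n-1+1 = n by omega), QIT.bp_fst, hfst0]
        simp only [map_zero, neg_zero]
      · rw [QIT2.cone_d_snd (truncGEι F s ≫ f) (show n-1+1 = n by omega),
          QIT.bp_fst, QIT.bp_snd, hz]
        simp only [map_zero, neg_zero, zero_add]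
    rw [quasiIsoAt_iff_exactAt g n hL]
    exact hC
  · -- case B : n = s - 1
    subst hn
    rw [QIT.quasiIsoAt_concrete_iff g (s-2) (s-1) (s-1+1) (by omega) rfl]
    have eL : (truncLE F (s-1)).X (s-1) = F.X (s-1) := QIT2.tLE_X F (by omega)
    have eL0 : (truncLE F (s-1)).X (s-2) = F.X (s-2) := QIT2.tLE_X F (by omega)
    have eT : (truncGE F s).X (s-1+1) = F.X (s-1+1) := QIT2.tGE_X F (by omega)
    have hgf : ∀ x : (truncLE F (s-1)).X (s-1),
        (biprod.fst : (cone (truncGEι F s ≫ f)).X (s-1) ⟶ (truncGE F s).X (s-1+1)) (g.f (s-1) x) = eqToHom eT.symm (F.d (s-1) (s-1+1) (eqToHom eL x))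
        ∧ (biprod.snd : (cone (truncGEι F s ≫ f)).X (s-1) ⟶ R.X (s-1)) (g.f (s-1) x) = f.f (s-1) (eqToHom eL x) := by
      intro x
      rw [hg_mid]
      constructor
      · exact QIT.lift_fst_apply _ _ _
      · exact QIT.lift_snd_apply _ _ _
    constructor
    · rintro x hx ⟨y, hy⟩
      have hz1 : IsZero ((truncGE F s).X (s-2+1)) := QIT2.tGE_isZero F (by omega)
      have hy0 : (biprod.fst : (cone (truncGEι F s ≫ f)).X (s-2) ⟶ (truncGE F s).X (s-2+1)) y = 0 := QIT.isZero_elim hz1 _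
      have hyf := congrArg (biprod.fst : (cone (truncGEι F s ≫ f)).X (s-1) ⟶ (truncGE F s).X (s-1+1)) hy
      rw [QIT2.cone_d_fst (truncGEι F s ≫ f) (show s-2+1 = s-1 by omega), (hgf x).1, hy0] at hyf
      simp only [map_zero, neg_zero] at hyf
      have hclosed : F.d (s-1) (s-1+1) (eqToHom eL x) = 0 := QIT.eq_app_eq_zero _ hyf.symm
      have hys := congrArg (biprod.snd : (cone (truncGEι F s ≫ f)).X (s-1) ⟶ R.X (s-1)) hy
      rw [QIT2.cone_d_snd (truncGEι F s ≫ f) (show s-2+1 = s-1 by omega), (hgf x).2, hy0] at hys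
      simp only [map_zero, neg_zero, zero_add] at hys
      obtain ⟨w, hw⟩ := hfinj (s-2) (s-1) (s-1+1) (by omega) rfl _ hclosed ⟨_, hys⟩
      refine ⟨eqToHom eL0.symm w, ?_⟩
      apply QIT.eq_inj eL
      have h3 := QIT2.tLE_d_apply F (show s-2+1 = s-1 by omega) (show s-1 ≤ s-1 by omega)
        (eqToHom eL0.symm w)
      have h4 : eqToHom (QIT2.tLE_X F (show s-2 ≤ s-1 by omega)) (eqToHom eL0.symm w) = w :=
        QIT.eq_cancel₂ _ _
      rw [h4] at h3
      exact h3.trans hw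
    · intro y hy
      have h1 := QIT2.cone_d_fst (truncGEι F s ≫ f) (rfl : s-1+1 = s-1+1) y
      rw [hy, map_zero] at h1
      have h1' : (truncGE F s).d (s-1+1) (s-1+1+1) ((biprod.fst : (cone (truncGEι F s ≫ f)).X (s-1) ⟶ (truncGE F s).X (s-1+1)) y) = 0 := neg_eq_zero.mp h1.symm
      have hda : F.d (s-1+1) (s-1+1+1) (eqToHom eT ((biprod.fst : (cone (truncGEι F s ≫ f)).X (s-1) ⟶ (truncGE F s).X (s-1+1)) y)) = 0 := by
        have h2 := QIT2.tGE_d_apply F (rfl : s-1+1+1 = s-1+1+1) (show s ≤ s-1+1 by omega)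
          ((biprod.fst : (cone (truncGEι F s ≫ f)).X (s-1) ⟶ (truncGE F s).X (s-1+1)) y)
        rw [h1', map_zero] at h2
        exact h2.symm
      have h3 := QIT2.cone_d_snd (truncGEι F s ≫ f) (rfl : s-1+1 = s-1+1) y
      rw [hy, map_zero, QIT.eq_rfl_app] at h3
      have hcompf : (truncGEι F s ≫ f).f (s-1+1) ((biprod.fst : (cone (truncGEι F s ≫ f)).X (s-1) ⟶ (truncGE F s).X (s-1+1)) y) = f.f (s-1+1) (eqToHom eT ((biprod.fst : (cone (truncGEι F s ≫ f)).X (s-1) ⟶ (truncGE F s).X (s-1+1)) y)) := by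
        show f.f (s-1+1) ((truncGEι F s).f (s-1+1) ((biprod.fst : (cone (truncGEι F s ≫ f)).X (s-1) ⟶ (truncGE F s).X (s-1+1)) y)) = _
        rw [QIT2.tGEι_f F (show s ≤ s-1+1 by omega)]
      rw [hcompf] at h3
      have hb : f.f (s-1+1) (eqToHom eT ((biprod.fst : (cone (truncGEι F s ≫ f)).X (s-1) ⟶ (truncGE F s).X (s-1+1)) y)) = R.d (s-1) (s-1+1) ((biprod.snd : (cone (truncGEι F s ≫ f)).X (s-1) ⟶ R.X (s-1)) y) :=
        neg_add_eq_zero.mp h3.symm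
      obtain ⟨w, hw⟩ := hfinj (s-1) (s-1+1) (s-1+1+1) rfl rfl _ hda ⟨(biprod.snd : (cone (truncGEι F s ≫ f)).X (s-1) ⟶ R.X (s-1)) y, hb.symm⟩
      have hcommw : R.d (s-1) (s-1+1) (f.f (s-1) w) = f.f (s-1+1) (F.d (s-1) (s-1+1) w) :=
        ConcreteCategory.congr_hom (f.comm (s-1) (s-1+1)) w
      have hy' : R.d (s-1) (s-1+1) ((biprod.snd : (cone (truncGEι F s ≫ f)).X (s-1) ⟶ R.X (s-1)) y - f.f (s-1) w) = 0 := by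
        rw [map_sub, hcommw, hw, hb]
        exact sub_self _
      obtain ⟨w₂, z₀, hw₂, hz₀⟩ := hfsurj (s-2) (s-1) (s-1+1) (by omega) rfl _ hy'
      have hc : eqToHom eL (eqToHom eL.symm (w + w₂)) = w + w₂ := QIT.eq_cancel₂ _ _
      refine ⟨eqToHom eL.symm (w + w₂), QIT.bp 0 z₀, ?_, ?_⟩
      · rw [QIT2.tLE_d_zero F (rfl : s-1+1 = s-1+1) (show ¬ (s-1+1 ≤ s-1) by omega)]
        rfl
      · apply QIT.bp_ext
        · rw [map_add, (hgf _).1, QIT2.cone_d_fst (truncGEι F s ≫ f) (show s-2+1 = s-1 by omega),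
            QIT.bp_fst, hc]
          simp only [map_zero, neg_zero, add_zero]
          rw [map_add, hw, hw₂, add_zero]
          exact QIT.eq_cancel₁ _ _
        · rw [map_add, (hgf _).2, QIT2.cone_d_snd (truncGEι F s ≫ f) (show s-2+1 = s-1 by omega),
            QIT.bp_fst, QIT.bp_snd, hc]
          simp only [map_zero, neg_zero, zero_add]
          rw [map_add, add_assoc, hz₀]
          abel
  · -- case C : s ≤ n, both exact
    have hL : (truncLE F (s-1)).ExactAt n := by
      rw [HomologicalComplex.exactAt_iff]
      exact ShortComplex.exact_of_isZero_X₂ _ (QIT2.tLE_isZero F (by omega))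

    have hC : (cone (truncGEι F s ≫ f)).ExactAt n := by
      rw [QIT.exactAt_concrete_iff _ (n-1) n (n+1) (by omega) rfl]
      intro x hx
      have eT2 : (truncGE F s).X (n+1) = F.X (n+1) := QIT2.tGE_X F (by omega)
      have h1 := QIT2.cone_d_fst (truncGEι F s ≫ f) (rfl : n + 1 = n + 1) x
      rw [hx, map_zero] at h1
      have h1' : (truncGE F s).d (n+1) (n+1+1)
          ((biprod.fst : (cone (truncGEι F s ≫ f)).X n ⟶ (truncGE F s).X (n+1)) x) = 0 := neg_eq_zero.mp h1.symm
      have hda : F.d (n+1) (n+1+1) (eqToHom eT2 ((biprod.fst : (cone (truncGEι F s ≫ f)).X n ⟶ (truncGE F s).X (n+1)) x)) = 0 := by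
        have h2 := QIT2.tGE_d_apply F (rfl : n+1+1 = n+1+1) (show s ≤ n+1 by omega)
          ((biprod.fst : (cone (truncGEι F s ≫ f)).X n ⟶ (truncGE F s).X (n+1)) x)
        rw [h1', map_zero] at h2
        exact h2.symm
      have h3 := QIT2.cone_d_snd (truncGEι F s ≫ f) (rfl : n + 1 = n + 1) x
      rw [hx, map_zero, QIT.eq_rfl_app] at h3
      have hcompf : (truncGEι F s ≫ f).f (n+1) ((biprod.fst : (cone (truncGEι F s ≫ f)).X n ⟶ (truncGE F s).X (n+1)) x)
          = f.f (n+1) (eqToHom eT2 ((biprod.fst : (cone (truncGEι F s ≫ f)).X n ⟶ (truncGE F s).X (n+1)) x)) := by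
        show f.f (n+1) ((truncGEι F s).f (n+1) ((biprod.fst : (cone (truncGEι F s ≫ f)).X n ⟶ (truncGE F s).X (n+1)) x)) = _
        rw [QIT2.tGEι_f F (show s ≤ n+1 by omega)]
      rw [hcompf] at h3
      have hb : f.f (n+1) (eqToHom eT2 ((biprod.fst : (cone (truncGEι F s ≫ f)).X n ⟶ (truncGE F s).X (n+1)) x)) = R.d n (n+1) ((biprod.snd : (cone (truncGEι F s ≫ f)).X n ⟶ R.X n) x) :=
        neg_add_eq_zero.mp h3.symm
      obtain ⟨w, hw⟩ := hfinj n (n+1) (n+1+1) rfl rfl _ hda ⟨(biprod.snd : (cone (truncGEι F s ≫ f)).X n ⟶ R.X n) x, hb.symm⟩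
      have hcommw : R.d n (n+1) (f.f n w) = f.f (n+1) (F.d n (n+1) w) :=
        ConcreteCategory.congr_hom (f.comm n (n+1)) w
      have hy' : R.d n (n+1) ((biprod.snd : (cone (truncGEι F s ≫ f)).X n ⟶ R.X n) x - f.f n w) = 0 := by
        rw [map_sub, hcommw, hw, hb]
        exact sub_self _
      obtain ⟨w₂, z₀, hw₂, hz₀⟩ := hfsurj (n-1) n (n+1) (by omega) rfl _ hy'
      have eF : F.X n = (truncGE F s).X (n-1+1) := by
        rw [show (n:ℤ)-1+1 = n by omega]
        exact (QIT2.tGE_X F (by omega)).symm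
      refine ⟨QIT.bp (eqToHom eF (-(w + w₂))) z₀, ?_⟩
      apply QIT.bp_ext
      · apply QIT.eq_inj eT2
        rw [QIT2.cone_d_fst (truncGEι F s ≫ f) (show n-1+1 = n by omega), QIT.bp_fst, map_neg]
        have h5 := QIT2.tGE_d_apply F (show (n-1+1)+1 = n+1 by omega)
          (show s ≤ n-1+1 by omega) (eqToHom eF (-(w + w₂)))
        have h7 : F.d (n-1+1) (n+1) (eqToHom (QIT2.tGE_X F (show s ≤ n-1+1 by omega))
            (eqToHom eF (-(w + w₂)))) = - eqToHom eT2 ((biprod.fst : (cone (truncGEι F s ≫ f)).X n ⟶ (truncGE F s).X (n+1)) x) := by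
          rw [QIT.eq_trans_app, QIT.d_congr F (n+1) (show n-1+1 = n by omega),
            QIT.eq_trans_app, QIT.eq_rfl_app, map_neg, map_add, hw, hw₂, add_zero]
        rw [show eqToHom eT2 ((truncGE F s).d (n-1+1) (n+1) (eqToHom eF (-(w + w₂)))) =
            - eqToHom eT2 ((biprod.fst : (cone (truncGEι F s ≫ f)).X n ⟶ (truncGE F s).X (n+1)) x) from h5.trans h7, neg_neg]
      · rw [QIT2.cone_d_snd (truncGEι F s ≫ f) (show n-1+1 = n by omega),
          QIT.bp_fst, QIT.bp_snd]
        have h8 : (truncGEι F s ≫ f).f n (eqToHom (congrArg (truncGE F s).X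
            (show n-1+1 = n by omega)) (eqToHom eF (-(w + w₂)))) = - f.f n (w + w₂) := by
          show f.f n ((truncGEι F s).f n (eqToHom (congrArg (truncGE F s).X
            (show n-1+1 = n by omega)) (eqToHom eF (-(w + w₂))))) = _
          rw [QIT2.tGEι_f F (show s ≤ n by omega), QIT.eq_trans_app, QIT.eq_trans_app,
            QIT.eq_rfl_app, map_neg]
        rw [h8, neg_neg, map_add, add_assoc, hz₀]
        abel
    rw [quasiIsoAt_iff_exactAt g n hL]
    exact hC


end
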